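/- For all k ∈ Z/nZ, all positive integers m, and all nonzero λ, μ ∈ k, there are isomorphisms of A-A-bimodules ^θB(k,m,λ) ≅ B(k−1,m,λ) and ^{η_μ}B(k,m,λ) ≅ B(k,m,λμ⁻¹). -/

import Mathlib

open scoped TensorProduct
open MulOpposite

noncomputable section

namespace NakayamaCells

variable (n : ℕ) (K : Type) [Field K]

/-- The radical square zero Nakayama algebra `A = Q_n` (for `n = 1` the dual numbers):
`e` records the coefficients of the idempotents `ε_i` at the vertices `i ∈ ℤ/n`,
`a` the coefficients of the arrows `α_i : i → i + 1`. -/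
@[ext]
structure Nak where
  e : ZMod n → K
  a : ZMod n → K

namespace Nak

variable {n K}

instance : Add (Nak n K) := ⟨fun x y => ⟨x.e + y.e, x.a + y.a⟩⟩
instance : Zero (Nak n K) := ⟨⟨0, 0⟩⟩
instance : Neg (Nak n K) := ⟨fun x => ⟨-x.e, -x.a⟩⟩
instance : Mul (Nak n K) :=
  ⟨fun x y => ⟨x.e * y.e, fun i => x.e (i + 1) * y.a i + x.a i * y.e i⟩⟩
instance : One (Nak n K) := ⟨⟨1, 0⟩⟩
instance : SMul K (Nak n K) := ⟨fun c x => ⟨c • x.e, c • x.a⟩⟩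

@[simp] lemma add_e (x y : Nak n K) : (x + y).e = x.e + y.e := rfl
@[simp] lemma add_a (x y : Nak n K) : (x + y).a = x.a + y.a := rfl
@[simp] lemma neg_e (x : Nak n K) : (-x).e = -x.e := rfl
@[simp] lemma neg_a (x : Nak n K) : (-x).a = -x.a := rfl
@[simp] lemma mul_e (x y : Nak n K) : (x * y).e = x.e * y.e := rfl
lemma mul_a (x y : Nak n K) : (x * y).a = fun i => x.e (i + 1) * y.a i + x.a i * y.e i := rfl
@[simp] lemma mul_a_apply (x y : Nak n K) (i : ZMod n) :
    (x * y).a i = x.e (i + 1) * y.a i + x.a i * y.e i := rfl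
@[simp] lemma one_e : (1 : Nak n K).e = 1 := rfl
@[simp] lemma one_a : (1 : Nak n K).a = 0 := rfl
@[simp] lemma zero_e : (0 : Nak n K).e = 0 := rfl
@[simp] lemma zero_a : (0 : Nak n K).a = 0 := rfl
@[simp] lemma smul_e (c : K) (x : Nak n K) : (c • x).e = c • x.e := rfl
@[simp] lemma smul_a (c : K) (x : Nak n K) : (c • x).a = c • x.a := rfl

instance : AddCommGroup (Nak n K) where
  add_assoc x y z := by refine Nak.ext ?_ ?_ <;> simp [add_assoc]
  zero_add x := by refine Nak.ext ?_ ?_ <;> simp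
  add_zero x := by refine Nak.ext ?_ ?_ <;> simp
  add_comm x y := by refine Nak.ext ?_ ?_ <;> simp [add_comm]
  neg_add_cancel x := by refine Nak.ext ?_ ?_ <;> simp
  nsmul := nsmulRec
  zsmul := zsmulRec

instance : Ring (Nak n K) where
  __ := (inferInstance : AddCommGroup (Nak n K))
  mul_assoc x y z := by
    refine Nak.ext ?_ ?_
    · simp [mul_assoc]
    · funext i; simp; ring
  one_mul x := by
    refine Nak.ext ?_ ?_
    · simp
    · funext i; simp
  mul_one x := by
    refine Nak.ext ?_ ?_
    · simp
    · funext i; simp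
  left_distrib x y z := by
    refine Nak.ext ?_ ?_
    · simp [mul_add]
    · funext i; simp; ring
  right_distrib x y z := by
    refine Nak.ext ?_ ?_
    · simp [add_mul]
    · funext i; simp; ring
  zero_mul x := by
    refine Nak.ext ?_ ?_ <;> (funext i; simp)
  mul_zero x := by
    refine Nak.ext ?_ ?_ <;> (funext i; simp)

instance : Module K (Nak n K) where
  one_smul x := by refine Nak.ext ?_ ?_ <;> simp
  mul_smul c d x := by refine Nak.ext ?_ ?_ <;> simp [mul_smul]
  smul_zero c := by refine Nak.ext ?_ ?_ <;> simp
  smul_add c x y := by refine Nak.ext ?_ ?_ <;> simp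
  add_smul c d x := by refine Nak.ext ?_ ?_ <;> simp [add_smul]
  zero_smul x := by refine Nak.ext ?_ ?_ <;> simp

instance : Algebra K (Nak n K) :=
  Algebra.ofModule
    (fun c x y => by
      refine Nak.ext ?_ ?_
      · simp [smul_mul_assoc]
      · funext i; simp [Pi.smul_apply, smul_eq_mul]; ring)
    (fun c x y => by
      refine Nak.ext ?_ ?_
      · simp [mul_smul_comm]
      · funext i; simp [Pi.smul_apply, smul_eq_mul]; ring)

@[simp] lemma algebraMap_e (c : K) : (algebraMap K (Nak n K) c).e = fun _ => c := by
  funext i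
  rw [Algebra.algebraMap_eq_smul_one]
  simp

@[simp] lemma algebraMap_a (c : K) : (algebraMap K (Nak n K) c).a = 0 := by
  rw [Algebra.algebraMap_eq_smul_one]
  simp

end Nak

/-- shift of a function on `ℤ/n`: `shift e i = e (i+1)`. -/
def shift {n : ℕ} {K : Type} (e : ZMod n → K) : ZMod n → K := fun i => e (i + 1)

end NakayamaCells
namespace NakayamaCells

variable {n : ℕ} {K : Type} [Field K]

section Helpers

variable {B : Type} [Semiring B] [Algebra K B]
variable {V W : Type} [AddCommGroup V] [Module K V] [AddCommGroup W] [Module K W]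

/-- auxiliary: product of two representations. -/
def prodAlgHom (ρ₁ : B →ₐ[K] Module.End K V) (ρ₂ : B →ₐ[K] Module.End K W) :
    B →ₐ[K] Module.End K (V × W) where
  toFun b := (ρ₁ b).prodMap (ρ₂ b)
  map_one' := by
    apply LinearMap.ext; rintro ⟨v, w⟩
    simp
  map_mul' x y := by
    apply LinearMap.ext; rintro ⟨v, w⟩
    simp [Module.End.mul_apply]
  map_zero' := by
    apply LinearMap.ext; rintro ⟨v, w⟩
    simp
  map_add' x y := by
    apply LinearMap.ext; rintro ⟨v, w⟩
    simp [LinearMap.add_apply]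
  commutes' c := by
    apply LinearMap.ext; rintro ⟨v, w⟩
    simp [Module.algebraMap_end_apply, Prod.smul_mk]

@[simp] lemma prodAlgHom_apply (ρ₁ : B →ₐ[K] Module.End K V) (ρ₂ : B →ₐ[K] Module.End K W)
    (b : B) (p : V × W) : prodAlgHom ρ₁ ρ₂ b p = (ρ₁ b p.1, ρ₂ b p.2) := rfl

/-- auxiliary: finite products of representations. -/
def piAlgHom {ι : Type} (Vs : ι → Type) [∀ i, AddCommGroup (Vs i)] [∀ i, Module K (Vs i)]
    (ρ : ∀ i, B →ₐ[K] Module.End K (Vs i)) : B →ₐ[K] Module.End K (∀ i, Vs i) where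
  toFun b :=
    { toFun := fun f i => ρ i b (f i)
      map_add' := fun f g => by funext i; simp
      map_smul' := fun c f => by funext i; simp }
  map_one' := by
    apply LinearMap.ext; intro f; funext i; simp
  map_mul' x y := by
    apply LinearMap.ext; intro f; funext i
    simp [Module.End.mul_apply]
  map_zero' := by
    apply LinearMap.ext; intro f; funext i; simp
  map_add' x y := by
    apply LinearMap.ext; intro f; funext i
    simp [LinearMap.add_apply]
  commutes' c := by
    apply LinearMap.ext; intro f; funext i
    simp [Module.algebraMap_end_apply]

@[simp] lemma piAlgHom_apply {ι : Type} (Vs : ι → Type) [∀ i, AddCommGroup (Vs i)]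
    [∀ i, Module K (Vs i)] (ρ : ∀ i, B →ₐ[K] Module.End K (Vs i)) (b : B) (f : ∀ i, Vs i)
    (i : ι) : piAlgHom Vs ρ b f i = ρ i b (f i) := rfl

/-- auxiliary: representation on `V ⊗ W` through the first factor. -/
def rTensorAlgHom (ρ : B →ₐ[K] Module.End K V) (W : Type) [AddCommGroup W] [Module K W] :
    B →ₐ[K] Module.End K (V ⊗[K] W) where
  toFun b := LinearMap.rTensor W (ρ b)
  map_one' := by
    apply TensorProduct.ext'; intro v w
    simp
  map_mul' x y := by
    apply TensorProduct.ext'; intro v w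
    simp [Module.End.mul_apply]
  map_zero' := by
    apply TensorProduct.ext'; intro v w
    simp
  map_add' x y := by
    apply TensorProduct.ext'; intro v w
    simp [LinearMap.add_apply, TensorProduct.add_tmul]
  commutes' c := by
    apply TensorProduct.ext'; intro v w
    simp [Module.algebraMap_end_apply, TensorProduct.smul_tmul']

/-- auxiliary: representation on `V ⊗ W` through the second factor. -/
def lTensorAlgHom (V : Type) [AddCommGroup V] [Module K V] (ρ : B →ₐ[K] Module.End K W) :
    B →ₐ[K] Module.End K (V ⊗[K] W) where
  toFun b := LinearMap.lTensor V (ρ b)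
  map_one' := by
    apply TensorProduct.ext'; intro v w
    simp
  map_mul' x y := by
    apply TensorProduct.ext'; intro v w
    simp [Module.End.mul_apply]
  map_zero' := by
    apply TensorProduct.ext'; intro v w
    simp
  map_add' x y := by
    apply TensorProduct.ext'; intro v w
    simp [LinearMap.add_apply, TensorProduct.tmul_add]
  commutes' c := by
    apply TensorProduct.ext'; intro v w
    simp [Module.algebraMap_end_apply, TensorProduct.tmul_smul]

end Helpers

variable (n K) in
/-- A finite dimensional `A`-`A`-bimodule over the radical square zero Nakayama
algebra `A = Q_n`, given by commuting left and right actions on a finite dimensional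
`K`-vector space. -/
structure BiMod where
  V : Type
  [grp : AddCommGroup V]
  [mod : Module K V]
  [fin : FiniteDimensional K V]
  ρ : Nak n K →ₐ[K] Module.End K V
  ρop : (Nak n K)ᵐᵒᵖ →ₐ[K] Module.End K V
  comm : ∀ x y, ρ x * ρop y = ρop y * ρ x

attribute [instance] BiMod.grp BiMod.mod BiMod.fin

namespace BiMod

/-- Isomorphism of bimodules. -/
def Iso (X Y : BiMod n K) : Prop :=
  ∃ f : X.V ≃ₗ[K] Y.V,
    (∀ a v, f (X.ρ a v) = Y.ρ a (f v)) ∧ (∀ a v, f (X.ρop a v) = Y.ρop a (f v))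

/-- Direct sum of two bimodules. -/
def dsum (X Y : BiMod n K) : BiMod n K where
  V := X.V × Y.V
  ρ := prodAlgHom X.ρ Y.ρ
  ρop := prodAlgHom X.ρop Y.ρop
  comm x y := by
    apply LinearMap.ext; rintro ⟨v, w⟩
    have h1 := DFunLike.congr_fun (X.comm x y) v
    have h2 := DFunLike.congr_fun (Y.comm x y) w
    simp only [Module.End.mul_apply] at h1 h2 ⊢
    simp [h1, h2]

/-- Finite direct sums of bimodules. -/
def dsumFin {ι : Type} [Fintype ι] (F : ι → BiMod n K) : BiMod n K where
  V := ∀ i, (F i).V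
  ρ := piAlgHom _ fun i => (F i).ρ
  ρop := piAlgHom _ fun i => (F i).ρop
  comm x y := by
    apply LinearMap.ext; intro f; funext i
    have h := DFunLike.congr_fun ((F i).comm x y) (f i)
    simp only [Module.End.mul_apply] at h ⊢
    simp [h]

/-- `X` is (isomorphic to) a direct summand of `W`. -/
def IsSummand (X W : BiMod n K) : Prop := ∃ C : BiMod n K, Iso W (dsum X C)

/-- Indecomposability: nonzero, and in every splitting as a direct sum one summand vanishes. -/
def Indec (X : BiMod n K) : Prop :=
  Nontrivial X.V ∧ ∀ Y Z : BiMod n K, Iso X (dsum Y Z) → Subsingleton Y.V ∨ Subsingleton Z.V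

section Tensor

variable (X Y : BiMod n K)

/-- The defining relations of `X ⊗_A Y` as a quotient of `X ⊗_K Y`. -/
def tensorRel : Submodule K (X.V ⊗[K] Y.V) :=
  Submodule.span K {z | ∃ (a : Nak n K) (x : X.V) (y : Y.V),
    z = (X.ρop (op a) x) ⊗ₜ[K] y - x ⊗ₜ[K] (Y.ρ a y)}

lemma tensorRel_le_left (b : Nak n K) :
    tensorRel X Y ≤ (tensorRel X Y).comap (LinearMap.rTensor Y.V (X.ρ b)) := by
  conv_lhs => rw [tensorRel]
  rw [Submodule.span_le]
  rintro z ⟨a, x, y, rfl⟩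
  simp only [SetLike.mem_coe, Submodule.mem_comap, map_sub, LinearMap.rTensor_tmul]
  have hc : X.ρ b (X.ρop (op a) x) = X.ρop (op a) (X.ρ b x) := by
    have := DFunLike.congr_fun (X.comm b (op a)) x
    simpa [Module.End.mul_apply] using this
  rw [hc]
  exact Submodule.subset_span ⟨a, X.ρ b x, y, rfl⟩

lemma tensorRel_le_right (b : (Nak n K)ᵐᵒᵖ) :
    tensorRel X Y ≤ (tensorRel X Y).comap (LinearMap.lTensor X.V (Y.ρop b)) := by
  conv_lhs => rw [tensorRel]
  rw [Submodule.span_le]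
  rintro z ⟨a, x, y, rfl⟩
  simp only [SetLike.mem_coe, Submodule.mem_comap, map_sub, LinearMap.lTensor_tmul]
  have hc : Y.ρop b (Y.ρ a y) = Y.ρ a (Y.ρop b y) := by
    have := DFunLike.congr_fun (Y.comm a b) y
    simp only [Module.End.mul_apply] at this
    exact this.symm
  rw [hc]
  exact Submodule.subset_span ⟨a, x, Y.ρop b y, rfl⟩

/-- The tensor product `X ⊗_A Y` of two bimodules. -/
def tensor : BiMod n K where
  V := (X.V ⊗[K] Y.V) ⧸ tensorRel X Y
  ρ :=
    { toFun := fun b => Submodule.mapQ _ _ (LinearMap.rTensor Y.V (X.ρ b))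
        (tensorRel_le_left X Y b)
      map_one' := by
        refine Submodule.linearMap_qext _ (TensorProduct.ext' fun x y => ?_)
        simp [Submodule.mapQ_apply]
      map_mul' := fun a b => by
        refine Submodule.linearMap_qext _ (TensorProduct.ext' fun x y => ?_)
        simp [Submodule.mapQ_apply, Module.End.mul_apply]
      map_zero' := by
        refine Submodule.linearMap_qext _ (TensorProduct.ext' fun x y => ?_)
        simp [Submodule.mapQ_apply]
      map_add' := fun a b => by
        refine Submodule.linearMap_qext _ (TensorProduct.ext' fun x y => ?_)
        simp [Submodule.mapQ_apply, LinearMap.add_apply, TensorProduct.add_tmul]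
      commutes' := fun c => by
        refine Submodule.linearMap_qext _ (TensorProduct.ext' fun x y => ?_)
        simp only [LinearMap.coe_comp, Function.comp_apply, Submodule.mkQ_apply,
          Submodule.mapQ_apply, LinearMap.rTensor_tmul, AlgHom.commutes,
          Module.algebraMap_end_apply]
        rw [← TensorProduct.smul_tmul', Submodule.Quotient.mk_smul] }
  ρop :=
    { toFun := fun b => Submodule.mapQ _ _ (LinearMap.lTensor X.V (Y.ρop b))
        (tensorRel_le_right X Y b)
      map_one' := by
        refine Submodule.linearMap_qext _ (TensorProduct.ext' fun x y => ?_)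
        simp [Submodule.mapQ_apply]
      map_mul' := fun a b => by
        refine Submodule.linearMap_qext _ (TensorProduct.ext' fun x y => ?_)
        simp [Submodule.mapQ_apply, Module.End.mul_apply]
      map_zero' := by
        refine Submodule.linearMap_qext _ (TensorProduct.ext' fun x y => ?_)
        simp [Submodule.mapQ_apply]
      map_add' := fun a b => by
        refine Submodule.linearMap_qext _ (TensorProduct.ext' fun x y => ?_)
        simp [Submodule.mapQ_apply, LinearMap.add_apply, TensorProduct.tmul_add]
      commutes' := fun c => by
        refine Submodule.linearMap_qext _ (TensorProduct.ext' fun x y => ?_)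
        simp only [LinearMap.coe_comp, Function.comp_apply, Submodule.mkQ_apply,
          Submodule.mapQ_apply, LinearMap.lTensor_tmul, AlgHom.commutes,
          Module.algebraMap_end_apply]
        rw [TensorProduct.tmul_smul, Submodule.Quotient.mk_smul] }
  comm x y := by
    refine Submodule.linearMap_qext _ (TensorProduct.ext' fun v w => ?_)
    simp [Submodule.mapQ_apply, Module.End.mul_apply]

end Tensor

end BiMod

end NakayamaCells
namespace NakayamaCells

variable {n : ℕ} {K : Type} [Field K]

namespace BiMod

/-- The left preorder: `X ≥_L Y` iff `X` is isomorphic to a direct summand of `Z ⊗_A Y`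
for some indecomposable `Z`. -/
def geL (X Y : BiMod n K) : Prop := ∃ Z : BiMod n K, Indec Z ∧ IsSummand X (tensor Z Y)

/-- The right preorder: `X ≥_R Y` iff `X` is isomorphic to a direct summand of `Y ⊗_A Z`
for some indecomposable `Z`. -/
def geR (X Y : BiMod n K) : Prop := ∃ Z : BiMod n K, Indec Z ∧ IsSummand X (tensor Y Z)

/-- The two-sided preorder: `X ≥_J Y` iff `X` is isomorphic to a direct summand of
`Z ⊗_A Y ⊗_A Z'` for some indecomposable `Z`, `Z'`. -/
def geJ (X Y : BiMod n K) : Prop :=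
  ∃ Z Z' : BiMod n K, Indec Z ∧ Indec Z' ∧ IsSummand X (tensor (tensor Z Y) Z')

/-- `X` and `Y` lie in the same left cell. -/
def SameLCell (X Y : BiMod n K) : Prop := geL X Y ∧ geL Y X

/-- `X` and `Y` lie in the same right cell. -/
def SameRCell (X Y : BiMod n K) : Prop := geR X Y ∧ geR Y X

/-- `X` and `Y` lie in the same two-sided cell. -/
def SameJCell (X Y : BiMod n K) : Prop := geJ X Y ∧ geJ Y X

/-- Twist of the left action by an algebra automorphism:  `^φX`. -/
def twistL (X : BiMod n K) (φ : Nak n K ≃ₐ[K] Nak n K) : BiMod n K :=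
  { X with
    ρ := X.ρ.comp φ.toAlgHom
    comm := fun x y => X.comm (φ x) y }

/-- Twist of the right action by an algebra automorphism:  `X^φ`. -/
def twistR (X : BiMod n K) (φ : Nak n K ≃ₐ[K] Nak n K) : BiMod n K :=
  { X with
    ρop := X.ρop.comp (AlgEquiv.op φ).toAlgHom
    comm := fun x y => X.comm x ((AlgEquiv.op φ) y) }

end BiMod

section MkBiMod

variable (V : Type) [AddCommGroup V] [Module K V] [FiniteDimensional K V]

/-- The diagonal action attached to a grading of a based vector space by `ℤ/n`. -/
def Pdiag {ι : Type} (g : ι → ZMod n) : (ZMod n → K) →ₐ[K] Module.End K (ι → K) where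
  toFun e :=
    { toFun := fun f p => e (g p) * f p
      map_add' := fun f f' => by funext p; simp [mul_add]
      map_smul' := fun c f => by
        funext p
        simp only [Pi.smul_apply, smul_eq_mul, RingHom.id_apply]
        ring }
  map_one' := by
    apply LinearMap.ext; intro f; funext p; simp
  map_mul' e e' := by
    apply LinearMap.ext; intro f; funext p
    simp only [Module.End.mul_apply, LinearMap.coe_mk, AddHom.coe_mk, Pi.mul_apply]
    ring
  map_zero' := by
    apply LinearMap.ext; intro f; funext p; simp
  map_add' e e' := by
    apply LinearMap.ext; intro f; funext p
    simp only [LinearMap.add_apply, LinearMap.coe_mk, AddHom.coe_mk, Pi.add_apply]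
    ring
  commutes' c := by
    apply LinearMap.ext; intro f; funext p
    simp [Module.algebraMap_end_apply]

@[simp] lemma Pdiag_apply {ι : Type} (g : ι → ZMod n) (e : ZMod n → K) (f : ι → K) (p : ι) :
    Pdiag g e f p = e (g p) * f p := rfl

lemma pi_const_eq_algebraMap (c : K) : (fun _ : ZMod n => c) = algebraMap K (ZMod n → K) c := by
  funext i
  simp [Pi.algebraMap_apply]

variable {V}

/-- Construct a bimodule over `A` from a row grading `P`, a column grading `Q`,
a square-zero operator `D` encoding the left action of the arrows, and a square-zero
operator `Dr` encoding the right action of the arrows. -/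
def mkBiMod (P Q : (ZMod n → K) →ₐ[K] Module.End K V) (D Dr : Module.End K V)
    (hD : D * D = 0) (hDr : Dr * Dr = 0)
    (hPD : ∀ e, P e * D = D * P (shift e))
    (hQDr : ∀ e, Dr * Q e = Q (shift e) * Dr)
    (hPQ : ∀ e f, P e * Q f = Q f * P e)
    (hDQ : ∀ f, D * Q f = Q f * D)
    (hDrP : ∀ e, Dr * P e = P e * Dr)
    (hDDr : D * Dr = Dr * D) : BiMod n K where
  V := V
  ρ :=
    { toFun := fun x => P x.e + D * P x.a
      map_one' := by simp
      map_zero' := by simp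
      map_add' := fun x y => by
        simp only [Nak.add_e, Nak.add_a, map_add, mul_add]
        abel
      map_mul' := fun x y => by
        have h3 : (x * y).a = shift x.e * y.a + x.a * y.e := rfl
        have h1 : P x.e * (D * P y.a) = D * (P (shift x.e) * P y.a) := by
          rw [← mul_assoc, hPD, mul_assoc]
        have h2 : D * P x.a * (D * P y.a) = 0 := by
          rw [mul_assoc, ← mul_assoc (P x.a), hPD, ← mul_assoc, ← mul_assoc, hD,
            zero_mul, zero_mul]
        calc P ((x * y).e) + D * P ((x * y).a)
            = P x.e * P y.e + (D * (P (shift x.e) * P y.a) + D * (P x.a * P y.e)) := by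
              rw [Nak.mul_e, h3, map_mul, map_add, map_mul, map_mul, mul_add]
          _ = (P x.e + D * P x.a) * (P y.e + D * P y.a) := by
              rw [add_mul, mul_add, mul_add, h1, h2, add_zero, mul_assoc]
              abel
      commutes' := fun c => by
        simp only [Nak.algebraMap_e, Nak.algebraMap_a, map_zero, mul_zero, add_zero]
        exact (congrArg P (pi_const_eq_algebraMap c)).trans (P.commutes c) }
  ρop :=
    { toFun := fun x => Q (MulOpposite.unop x).e + Q (MulOpposite.unop x).a * Dr
      map_one' := by simp
      map_zero' := by simp
      map_add' := fun x y => by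
        simp only [MulOpposite.unop_add, Nak.add_e, Nak.add_a, map_add, add_mul]
        abel
      map_mul' := fun x y => by
        have hu : MulOpposite.unop (x * y) = MulOpposite.unop y * MulOpposite.unop x := rfl
        set u := MulOpposite.unop x with hu'
        set v := MulOpposite.unop y with hv'
        have he : (v * u).e = u.e * v.e := mul_comm _ _
        have ha : (v * u).a = u.a * shift v.e + u.e * v.a := by
          funext i
          show v.e (i + 1) * u.a i + v.a i * u.e i
             = u.a i * (shift v.e) i + u.e i * v.a i
          show v.e (i + 1) * u.a i + v.a i * u.e i
             = u.a i * v.e (i + 1) + u.e i * v.a i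
          ring
        have h1 : Q u.a * Dr * Q v.e = Q (u.a * shift v.e) * Dr := by
          rw [mul_assoc, hQDr, ← mul_assoc, ← map_mul]
        have h2 : Q u.a * Dr * (Q v.a * Dr) = 0 := by
          rw [mul_assoc, ← mul_assoc Dr, hQDr, mul_assoc, hDr, mul_zero, mul_zero]
        calc Q (MulOpposite.unop (x * y)).e + Q (MulOpposite.unop (x * y)).a * Dr
            = Q (u.e * v.e) + (Q (u.a * shift v.e) * Dr + Q (u.e * v.a) * Dr) := by
              rw [hu, he, ha, map_add, add_mul]
          _ = (Q u.e + Q u.a * Dr) * (Q v.e + Q v.a * Dr) := by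
              rw [add_mul, mul_add, mul_add, h1, h2, add_zero, ← mul_assoc,
                ← map_mul, ← map_mul]
              abel
      commutes' := fun c => by
        have h : MulOpposite.unop (algebraMap K (Nak n K)ᵐᵒᵖ c) = algebraMap K (Nak n K) c := by
          simp [MulOpposite.algebraMap_apply]
        show Q (MulOpposite.unop (algebraMap K (Nak n K)ᵐᵒᵖ c)).e
            + Q (MulOpposite.unop (algebraMap K (Nak n K)ᵐᵒᵖ c)).a * Dr
            = algebraMap K (Module.End K V) c
        rw [h]
        simp only [Nak.algebraMap_e, Nak.algebraMap_a, map_zero, zero_mul, add_zero]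
        exact (congrArg Q (pi_const_eq_algebraMap c)).trans (Q.commutes c) }
  comm := fun x y => by
    have c1 : ∀ f g, Commute (P f) (Q g) := fun f g => hPQ f g
    have c2 : ∀ f, Commute (P f) Dr := fun f => (hDrP f).symm
    have c3 : ∀ g, Commute D (Q g) := fun g => hDQ g
    have c4 : Commute D Dr := hDDr
    show Commute (P x.e + D * P x.a)
      (Q (MulOpposite.unop y).e + Q (MulOpposite.unop y).a * Dr)
    exact Commute.add_left
      ((c1 _ _).add_right ((c1 _ _).mul_right (c2 _)))
      ((((c3 _).mul_left (c1 _ _))).add_right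
        ((((c3 _).mul_right c4)).mul_left ((c1 _ _).mul_right (c2 _))))

end MkBiMod

end NakayamaCells
namespace NakayamaCells

variable {n : ℕ} {K : Type} [Field K]

/-- The course (initial direction) of a string: `r` = right, `d` = down. -/
inductive Course | r | d
deriving DecidableEq

/-- Whether the step from position `p` to `p+1` of the alternating walk with initial
course `c` is a vertical (downward) step. -/
def vert (c : Course) (p : ℕ) : Prop :=
  match c with
  | .r => p % 2 = 1
  | .d => p % 2 = 0

instance (c : Course) (p : ℕ) : Decidable (vert c p) :=
  match c with
  | .r => inferInstanceAs (Decidable (p % 2 = 1))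
  | .d => inferInstanceAs (Decidable (p % 2 = 0))

/-- Row offset (relative first coordinate) of position `p` of the walk. -/
def rowOff (c : Course) (p : ℕ) : ℕ :=
  match c with
  | .r => p / 2
  | .d => (p + 1) / 2

/-- Column offset (relative second coordinate) of position `p` of the walk. -/
def colOff (c : Course) (p : ℕ) : ℕ :=
  match c with
  | .r => (p + 1) / 2
  | .d => p / 2

lemma rowOff_succ_of_vert {c : Course} {q : ℕ} (h : vert c q) :
    rowOff c (q + 1) = rowOff c q + 1 := by
  cases c <;> simp only [vert, rowOff] at h ⊢ <;> omega

lemma colOff_succ_of_vert {c : Course} {q : ℕ} (h : vert c q) :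
    colOff c (q + 1) = colOff c q := by
  cases c <;> simp only [vert, colOff] at h ⊢ <;> omega

lemma rowOff_succ_of_not_vert {c : Course} {q : ℕ} (h : ¬ vert c q) :
    rowOff c (q + 1) = rowOff c q := by
  cases c <;> simp only [vert, rowOff] at h ⊢ <;> omega

lemma colOff_succ_of_not_vert {c : Course} {q : ℕ} (h : ¬ vert c q) :
    colOff c (q + 1) = colOff c q + 1 := by
  cases c <;> simp only [vert, colOff] at h ⊢ <;> omega

lemma not_vert_of_vert_pred {c : Course} {q : ℕ} (h0 : 0 < q) (h : vert c (q - 1)) :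
    ¬ vert c q := by
  cases c <;> simp only [vert] at h ⊢ <;> omega

/-- The total left-arrow operator of a string module: the vertical arrows of the walk. -/
def strD (c : Course) (l : ℕ) : Module.End K (Fin (l + 1) → K) where
  toFun f p := if 0 < (p : ℕ) ∧ vert c ((p : ℕ) - 1) then
      f ⟨(p : ℕ) - 1, by have := p.isLt; omega⟩ else 0
  map_add' f g := by funext p; dsimp only [Pi.add_apply]; split_ifs <;> simp
  map_smul' a f := by funext p; dsimp only [Pi.smul_apply, RingHom.id_apply]; split_ifs <;> simp

/-- The total right-arrow operator of a string module: the horizontal arrows of the walk. -/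
def strDr (c : Course) (l : ℕ) : Module.End K (Fin (l + 1) → K) where
  toFun f p := if h : (p : ℕ) < l ∧ ¬ vert c (p : ℕ) then
      f ⟨(p : ℕ) + 1, by omega⟩ else 0
  map_add' f g := by funext p; dsimp only [Pi.add_apply]; split_ifs <;> simp
  map_smul' a f := by funext p; dsimp only [Pi.smul_apply, RingHom.id_apply]; split_ifs <;> simp

@[simp] lemma strD_apply (c : Course) (l : ℕ) (f : Fin (l + 1) → K) (p : Fin (l + 1)) :
    strD (K := K) c l f p = if 0 < (p : ℕ) ∧ vert c ((p : ℕ) - 1) then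
      f ⟨(p : ℕ) - 1, by have := p.isLt; omega⟩ else 0 := rfl

@[simp] lemma strDr_apply (c : Course) (l : ℕ) (f : Fin (l + 1) → K) (p : Fin (l + 1)) :
    strDr (K := K) c l f p = if h : (p : ℕ) < l ∧ ¬ vert c (p : ℕ) then
      f ⟨(p : ℕ) + 1, by omega⟩ else 0 := rfl

/-- The string bimodule `Θ(V(v, c, l))`: a copy of `K` is placed at every vertex of the
alternating walk of length `l` starting at the vertex `v` with initial course `c`, with
identity structure maps along the arrows of the walk. -/
def stringB (v : ZMod n × ZMod n) (c : Course) (l : ℕ) : BiMod n K :=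
  mkBiMod
    (Pdiag fun p : Fin (l + 1) => v.1 + (rowOff c (p : ℕ) : ZMod n))
    (Pdiag fun p : Fin (l + 1) => v.2 + (colOff c (p : ℕ) : ZMod n))
    (strD c l) (strDr c l)
    (by -- D * D = 0
      apply LinearMap.ext; intro f; funext p
      simp only [Module.End.mul_apply, strD_apply, LinearMap.zero_apply, Pi.zero_apply]
      split_ifs with h1 h2
      · exfalso
        rcases h1 with ⟨hp, hv⟩
        rcases h2 with ⟨hp2, hv2⟩
        cases c <;> simp only [vert] at hv hv2 <;> omega
      · rfl
      · rfl)
    (by -- Dr * Dr = 0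
      apply LinearMap.ext; intro f; funext p
      simp only [Module.End.mul_apply, strDr_apply, LinearMap.zero_apply, Pi.zero_apply]
      split_ifs with h1 h2
      · exfalso
        rcases h1 with ⟨hp, hv⟩
        rcases h2 with ⟨hp2, hv2⟩
        cases c <;> simp only [vert] at hv hv2 <;> push_neg at * <;> omega
      · rfl
      · rfl)
    (by -- P e * D = D * P (shift e)
      intro e
      apply LinearMap.ext; intro f; funext p
      simp only [Module.End.mul_apply, strD_apply, Pdiag_apply]
      split_ifs with h
      · have h1 : ((p : ℕ) - 1) + 1 = (p : ℕ) := by omega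
        have hr : rowOff c (p : ℕ) = rowOff c ((p : ℕ) - 1) + 1 := by
          conv_lhs => rw [← h1]
          exact rowOff_succ_of_vert h.2
        show e (v.1 + (rowOff c (p : ℕ) : ZMod n)) * f _
            = (shift e) (v.1 + (rowOff c ((p : ℕ) - 1) : ZMod n)) * f _
        show e (v.1 + (rowOff c (p : ℕ) : ZMod n)) * f _
            = e (v.1 + (rowOff c ((p : ℕ) - 1) : ZMod n) + 1) * f _
        rw [hr]
        push_cast
        ring_nf
      · exact mul_zero _)
    (by -- Dr * Q e = Q (shift e) * Dr
      intro e
      apply LinearMap.ext; intro f; funext p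
      simp only [Module.End.mul_apply, strDr_apply, Pdiag_apply]
      split_ifs with h
      · have hcc : colOff c ((p : ℕ) + 1) = colOff c (p : ℕ) + 1 :=
          colOff_succ_of_not_vert h.2
        show e (v.2 + (colOff c ((p : ℕ) + 1) : ZMod n)) * f _
            = (shift e) (v.2 + (colOff c (p : ℕ) : ZMod n)) * f _
        show e (v.2 + (colOff c ((p : ℕ) + 1) : ZMod n)) * f _
            = e (v.2 + (colOff c (p : ℕ) : ZMod n) + 1) * f _
        rw [hcc]
        push_cast
        ring_nf
      · exact (mul_zero _).symm)
    (by -- P e * Q f' = Q f' * P e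
      intro e f'
      apply LinearMap.ext; intro f; funext p
      simp only [Module.End.mul_apply, Pdiag_apply]
      ring)
    (by -- D * Q g = Q g * D
      intro g
      apply LinearMap.ext; intro f; funext p
      simp only [Module.End.mul_apply, strD_apply, Pdiag_apply]
      split_ifs with h
      · have hcc : colOff c (p : ℕ) = colOff c ((p : ℕ) - 1) := by
          have h1 : ((p : ℕ) - 1) + 1 = (p : ℕ) := by omega
          conv_lhs => rw [← h1]
          exact colOff_succ_of_vert h.2
        show g (v.2 + (colOff c ((p : ℕ) - 1) : ZMod n)) * f _
            = g (v.2 + (colOff c (p : ℕ) : ZMod n)) * f _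
        rw [hcc]
      · exact (mul_zero _).symm)
    (by -- Dr * P e = P e * Dr
      intro e
      apply LinearMap.ext; intro f; funext p
      simp only [Module.End.mul_apply, strDr_apply, Pdiag_apply]
      split_ifs with h
      · have hrr : rowOff c ((p : ℕ) + 1) = rowOff c (p : ℕ) :=
          rowOff_succ_of_not_vert h.2
        show e (v.1 + (rowOff c ((p : ℕ) + 1) : ZMod n)) * f _
            = e (v.1 + (rowOff c (p : ℕ) : ZMod n)) * f _
        rw [hrr]
      · exact (mul_zero _).symm)
    (by -- D * Dr = Dr * D
      apply LinearMap.ext; intro f; funext p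
      simp only [Module.End.mul_apply, strD_apply, strDr_apply]
      split_ifs <;> try rfl
      all_goals (exfalso; cases c <;> simp only [vert] at * <;> omega))

/-- The number of valleys of the string `V(v,c,l)`. -/
def numValleys (c : Course) (l : ℕ) : ℕ :=
  match c with
  | .r => (l - 1) / 2
  | .d => l / 2

/-- The width (number of nonzero columns) of the string `V(v,c,l)`. -/
def swidth (c : Course) (l : ℕ) : ℕ := colOff c l + 1

/-- The height (number of nonzero rows) of the string `V(v,c,l)`. -/
def sheight (c : Course) (l : ℕ) : ℕ := rowOff c l + 1

/-- The four types of string bimodules. -/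
inductive StringType | M | N | W | S
deriving DecidableEq

/-- The type of the string `V(v,c,l)`. -/
def typeOf (c : Course) (l : ℕ) : StringType :=
  match c, l % 2 with
  | .r, 0 => .M
  | .r, _ => .N
  | .d, 0 => .W
  | .d, _ => .S

/-- `X` is a string bimodule with exactly `k` valleys. -/
def IsStringOfValleys (k : ℕ) (X : BiMod n K) : Prop :=
  ∃ (v : ZMod n × ZMod n) (c : Course) (l : ℕ),
    numValleys c l = k ∧ BiMod.Iso X (stringB v c l)

end NakayamaCells
namespace NakayamaCells

variable {n : ℕ} {K : Type} [Field K]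

/-- The rotation automorphism of `A` sending `ε_i ↦ ε_{i+c}` and `α_i ↦ α_{i+c}`. -/
def rot (c : ZMod n) : Nak n K ≃ₐ[K] Nak n K where
  toFun x := ⟨fun i => x.e (i - c), fun i => x.a (i - c)⟩
  invFun x := ⟨fun i => x.e (i + c), fun i => x.a (i + c)⟩
  left_inv x := by
    refine Nak.ext ?_ ?_ <;> funext i <;> simp
  right_inv x := by
    refine Nak.ext ?_ ?_ <;> funext i <;> simp
  map_mul' x y := by
    refine Nak.ext ?_ ?_
    · funext i
      simp
    · funext i
      show (x * y).a (i - c) = _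
      simp only [Nak.mul_a_apply]
      have h : i - c + 1 = i + 1 - c := by ring
      rw [h]
  map_add' x y := by
    refine Nak.ext ?_ ?_ <;> funext i <;> simp
  commutes' r := by
    refine Nak.ext ?_ ?_ <;> funext i <;> simp

/-- The elementary rotation `θ` of the quiver (identity for `n = 1`). -/
def theta : Nak n K ≃ₐ[K] Nak n K := rot 1

/-- The automorphism `η_λ` of `A` multiplying the arrow `α_1` by the unit `u` and fixing
all other standard basis vectors. -/
def eta (u : Kˣ) : Nak n K ≃ₐ[K] Nak n K where
  toFun x := ⟨x.e, fun i => (if i = 1 then (u : K) else 1) * x.a i⟩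
  invFun x := ⟨x.e, fun i => (if i = 1 then ((u⁻¹ : Kˣ) : K) else 1) * x.a i⟩
  left_inv x := by
    refine Nak.ext rfl ?_
    funext i
    show (if i = 1 then ((u⁻¹ : Kˣ) : K) else 1) * ((if i = 1 then (u : K) else 1) * x.a i) = x.a i
    split_ifs <;> simp
  right_inv x := by
    refine Nak.ext rfl ?_
    funext i
    show (if i = 1 then (u : K) else 1) * ((if i = 1 then ((u⁻¹ : Kˣ) : K) else 1) * x.a i) = x.a i
    split_ifs <;> simp
  map_mul' x y := by
    refine Nak.ext rfl ?_
    funext i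
    show (if i = 1 then (u : K) else 1) * (x.e (i + 1) * y.a i + x.a i * y.e i)
        = x.e (i + 1) * ((if i = 1 then (u : K) else 1) * y.a i)
          + ((if i = 1 then (u : K) else 1) * x.a i) * y.e i
    ring
  map_add' x y := by
    refine Nak.ext rfl ?_
    funext i
    show (if i = 1 then (u : K) else 1) * (x.a i + y.a i)
        = (if i = 1 then (u : K) else 1) * x.a i + (if i = 1 then (u : K) else 1) * y.a i
    ring
  commutes' r := by
    refine Nak.ext rfl ?_
    funext i
    show (if i = 1 then (u : K) else 1) * (algebraMap K (Nak n K) r).a i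
        = (algebraMap K (Nak n K) r).a i
    simp

section Band

/-- The left-arrow operator of the band bimodule. -/
def bandD (m : ℕ) : Module.End K ((Bool × ZMod n × Fin m) → K) where
  toFun f q := if q.1 = true then f (false, q.2.1, q.2.2) else 0
  map_add' f g := by funext q; dsimp only [Pi.add_apply]; split_ifs <;> simp
  map_smul' a f := by funext q; dsimp only [Pi.smul_apply, RingHom.id_apply]; split_ifs <;> simp

/-- The right-arrow operator of the band bimodule, with Jordan block `J_m(λ)`
as the right action of the arrow `α_1`. -/
def bandDr (m : ℕ) (lam : K) : Module.End K ((Bool × ZMod n × Fin m) → K) where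
  toFun f q := if q.1 = true then
      (if q.2.1 = 1 then
        lam * f (false, q.2.1 + 1, q.2.2)
          + (if h : (q.2.2 : ℕ) + 1 < m then f (false, q.2.1 + 1, ⟨(q.2.2 : ℕ) + 1, h⟩) else 0)
       else f (false, q.2.1 + 1, q.2.2))
    else 0
  map_add' f g := by
    funext q; dsimp only [Pi.add_apply]; split_ifs <;> first | rfl | ring | simp
  map_smul' a f := by
    funext q; dsimp only [Pi.smul_apply, RingHom.id_apply, smul_eq_mul]
    split_ifs <;> first | rfl | ring | simp

@[simp] lemma bandD_apply (m : ℕ) (f : (Bool × ZMod n × Fin m) → K) (q) :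
    bandD (K := K) m f q = if q.1 = true then f (false, q.2.1, q.2.2) else 0 := rfl

@[simp] lemma bandDr_apply (m : ℕ) (lam : K) (f : (Bool × ZMod n × Fin m) → K) (q) :
    bandDr (K := K) m lam f q = if q.1 = true then
      (if q.2.1 = 1 then
        lam * f (false, q.2.1 + 1, q.2.2)
          + (if h : (q.2.2 : ℕ) + 1 < m then f (false, q.2.1 + 1, ⟨(q.2.2 : ℕ) + 1, h⟩) else 0)
       else f (false, q.2.1 + 1, q.2.2))
    else 0 := rfl

variable [NeZero n]

/-- The band bimodule `B(1, m, λ)`. -/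
def bandB1 (m : ℕ) (lam : K) : BiMod n K :=
  mkBiMod
    (Pdiag fun q : Bool × ZMod n × Fin m => if q.1 then q.2.1 + 1 else q.2.1)
    (Pdiag fun q : Bool × ZMod n × Fin m => q.2.1)
    (bandD m) (bandDr m lam)
    (by -- D * D = 0
      apply LinearMap.ext; intro f; funext q
      simp only [Module.End.mul_apply, bandD_apply, LinearMap.zero_apply, Pi.zero_apply]
      split_ifs <;> first | rfl | contradiction)
    (by -- Dr * Dr = 0
      apply LinearMap.ext; intro f; funext q
      simp only [Module.End.mul_apply, bandDr_apply, LinearMap.zero_apply, Pi.zero_apply]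
      split_ifs <;> first | rfl | contradiction | simp)
    (by -- P e * D = D * P (shift e)
      intro e
      apply LinearMap.ext; intro f; funext q
      obtain ⟨b, i, s⟩ := q
      simp only [Module.End.mul_apply, bandD_apply, Pdiag_apply, shift]
      cases b <;> try simp
    )
    (by -- Dr * Q e = Q (shift e) * Dr
      intro e
      apply LinearMap.ext; intro f; funext q
      obtain ⟨b, i, s⟩ := q
      simp only [Module.End.mul_apply, bandDr_apply, Pdiag_apply, shift]
      cases b <;> try simp
      all_goals try split_ifs
      all_goals first | rfl | contradiction | ring | simp)
    (by -- P e * Q f' = Q f' * P e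
      intro e f'
      apply LinearMap.ext; intro f; funext q
      simp only [Module.End.mul_apply, Pdiag_apply]
      ring)
    (by -- D * Q g = Q g * D
      intro g
      apply LinearMap.ext; intro f; funext q
      obtain ⟨b, i, s⟩ := q
      simp only [Module.End.mul_apply, bandD_apply, Pdiag_apply]
      cases b <;> try simp)
    (by -- Dr * P e = P e * Dr
      intro e
      apply LinearMap.ext; intro f; funext q
      obtain ⟨b, i, s⟩ := q
      simp only [Module.End.mul_apply, bandDr_apply, Pdiag_apply]
      cases b <;> try simp
      all_goals try split_ifs
      all_goals first | rfl | contradiction | ring | simp)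
    (by -- D * Dr = Dr * D
      apply LinearMap.ext; intro f; funext q
      obtain ⟨b, i, s⟩ := q
      simp only [Module.End.mul_apply, bandD_apply, bandDr_apply]
      cases b <;> try simp
      all_goals try split_ifs
      all_goals first | rfl | contradiction | simp)

/-- The band bimodule `B(k, m, λ) = B(1, m, λ)^{θ^{k-1}}`. -/
def bandB (k : ZMod n) (m : ℕ) (lam : K) : BiMod n K :=
  (bandB1 m lam).twistR (rot (k - 1))

/-- `X` is a band bimodule. -/
def IsBand (X : BiMod n K) : Prop :=
  ∃ (k : ZMod n) (m : ℕ) (lam : K), 0 < m ∧ lam ≠ 0 ∧ BiMod.Iso X (bandB k m lam)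

end Band

end NakayamaCells
open scoped TensorProduct

namespace NakayamaCells

variable (n : ℕ) (K : Type) [Field K]

/-- A finite dimensional left `A`-module. -/
structure LMod where
  V : Type
  [grp : AddCommGroup V]
  [mod : Module K V]
  [fin : FiniteDimensional K V]
  ρ : Nak n K →ₐ[K] Module.End K V

/-- A finite dimensional right `A`-module. -/
structure RMod where
  V : Type
  [grp : AddCommGroup V]
  [mod : Module K V]
  [fin : FiniteDimensional K V]
  ρop : (Nak n K)ᵐᵒᵖ →ₐ[K] Module.End K V

attribute [instance] LMod.grp LMod.mod LMod.fin RMod.grp RMod.mod RMod.fin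

variable {n K}

namespace LMod

/-- Isomorphism of left `A`-modules. -/
def Iso (M M' : LMod n K) : Prop :=
  ∃ f : M.V ≃ₗ[K] M'.V, ∀ a v, f (M.ρ a v) = M'.ρ a (f v)

/-- Direct sum of left `A`-modules. -/
def dsum (M M' : LMod n K) : LMod n K where
  V := M.V × M'.V
  ρ := prodAlgHom M.ρ M'.ρ

/-- Indecomposability of a left `A`-module. -/
def Indec (M : LMod n K) : Prop :=
  Nontrivial M.V ∧ ∀ M' M'' : LMod n K, Iso M (dsum M' M'') →
    Subsingleton M'.V ∨ Subsingleton M''.V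

end LMod

namespace RMod

/-- Isomorphism of right `A`-modules. -/
def Iso (N N' : RMod n K) : Prop :=
  ∃ f : N.V ≃ₗ[K] N'.V, ∀ a v, f (N.ρop a v) = N'.ρop a (f v)

/-- Direct sum of right `A`-modules. -/
def dsum (N N' : RMod n K) : RMod n K where
  V := N.V × N'.V
  ρop := prodAlgHom N.ρop N'.ρop

/-- Indecomposability of a right `A`-module. -/
def Indec (N : RMod n K) : Prop :=
  Nontrivial N.V ∧ ∀ N' N'' : RMod n K, Iso N (dsum N' N'') →
    Subsingleton N'.V ∨ Subsingleton N''.V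

end RMod

/-- The `K`-split bimodule `M ⊗_K N` built from a left module `M` and a right module `N`. -/
def splitBiMod (M : LMod n K) (N : RMod n K) : BiMod n K where
  V := M.V ⊗[K] N.V
  ρ := rTensorAlgHom M.ρ N.V
  ρop := lTensorAlgHom M.V N.ρop
  comm x y := by
    apply TensorProduct.ext'
    intro v w
    simp [Module.End.mul_apply, rTensorAlgHom, lTensorAlgHom]

/-- `X` is a `K`-split bimodule, i.e. isomorphic to some `M ⊗_K N`. -/
def IsSplit (X : BiMod n K) : Prop :=
  ∃ (M : LMod n K) (N : RMod n K), BiMod.Iso X (splitBiMod M N)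

end NakayamaCells

namespace NakayamaCells

/-!
All structure maps of `B(k,m,λ)` are identities except the right action of `α_1`, which is
`J_m(λ)`.

Twisting by `θ` rotates the left grading by one vertex. Shifting the slices back by one gives
`B(k-1,m,λ)` except that `J_m(λ)` now sits on the wrong arrow; applying `J_m(λ)` to one slice
moves it to the right arrow, and this is invertible because `λ ≠ 0`.

Twisting by `η_μ` multiplies the left action of `α_1` by `μ`. Rescaling the `s`-th basis vector
of every slice by `μ^{-s}`, with one more factor `μ⁻¹` at the head of `α_1`, absorbs this factor
and conjugates `J_m(λ)` to `J_m(λμ⁻¹)`.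
-/

lemma LinearMap.apply_fun_add {R ι κ : Type*} [Semiring R] (L : (ι → R) →ₗ[R] (κ → R))
    (f g : ι → R) (s : κ) : L (fun t => f t + g t) s = L f s + L g s :=
  congrFun (map_add L f g) s

lemma LinearMap.apply_fun_mul {R ι κ : Type*} [Semiring R] (L : (ι → R) →ₗ[R] (κ → R))
    (c : R) (f : ι → R) (s : κ) : L (fun t => c * f t) s = c * L f s :=
  congrFun (map_smul L c f) s

variable {n : ℕ} {K : Type} [Field K]

@[simp] lemma theta_e (x : Nak n K) (j : ZMod n) : (theta x).e j = x.e (j - 1) := rfl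

@[simp] lemma theta_a (x : Nak n K) (j : ZMod n) : (theta x).a j = x.a (j - 1) := rfl

@[simp] lemma eta_e (u : Kˣ) (x : Nak n K) : (eta u x).e = x.e := rfl

@[simp] lemma eta_a (u : Kˣ) (x : Nak n K) (j : ZMod n) :
    (eta u x).a j = (if j = 1 then (u : K) else 1) * x.a j := rfl

section Jordan

variable (m : ℕ) (lam : K)

def jordan : (Fin m → K) →ₗ[K] (Fin m → K) where
  toFun g s := lam * g s + if h : (s : ℕ) + 1 < m then g ⟨s + 1, h⟩ else 0
  map_add' g h := by
    funext s
    simp only [Pi.add_apply]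
    split_ifs <;> ring
  map_smul' c g := by
    funext s
    simp only [Pi.smul_apply, smul_eq_mul, RingHom.id_apply]
    split_ifs <;> ring

lemma jordan_apply (g : Fin m → K) (s : Fin m) :
    jordan m lam g s = lam * g s + if h : (s : ℕ) + 1 < m then g ⟨s + 1, h⟩ else 0 := rfl

variable {m lam}

lemma apply_eq_zero_of_jordan_eq_zero (hlam : lam ≠ 0) {g : Fin m → K}
    (hg : jordan m lam g = 0) (s : Fin m) : g s = 0 := by
  have hs := congrFun hg s
  rw [jordan_apply, Pi.zero_apply] at hs
  split_ifs at hs with h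
  · rw [apply_eq_zero_of_jordan_eq_zero hlam hg ⟨s + 1, h⟩, add_zero] at hs
    exact (mul_eq_zero.mp hs).resolve_left hlam
  · exact (mul_eq_zero.mp ((add_zero _).symm.trans hs)).resolve_left hlam
termination_by m - s

lemma jordan_injective (hlam : lam ≠ 0) : Function.Injective (jordan m lam) :=
  (injective_iff_map_eq_zero _).mpr fun _ hg => funext (apply_eq_zero_of_jordan_eq_zero hlam hg)

lemma pow_succ_mul_jordan_apply (c : K) (g : Fin m → K) (s : Fin m) :
    c ^ ((s : ℕ) + 1) * jordan m lam g s = jordan m (lam * c) (fun t => c ^ (t : ℕ) * g t) s := by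
  simp only [jordan_apply]
  split_ifs <;> ring

end Jordan

section Band

variable (m : ℕ) (lam : K)

/-- The right action of `α_i` on `B(1,m,λ)`, from the slice `(false, i + 1, ·)` to `(true, i, ·)`. -/
def bandArrow (i : ZMod n) : (Fin m → K) →ₗ[K] (Fin m → K) :=
  if i = 1 then jordan m lam else LinearMap.id

def thetaBandMap : ((Bool × ZMod n × Fin m) → K) →ₗ[K] ((Bool × ZMod n × Fin m) → K) :=
  LinearMap.pi fun q => (LinearMap.proj q.2.2).comp
    ((bandArrow m lam q.2.1).comp (LinearMap.funLeft K K fun t => (q.1, q.2.1 + 1, t)))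

lemma thetaBandMap_apply (F : (Bool × ZMod n × Fin m) → K) (b : Bool) (i : ZMod n) (s : Fin m) :
    thetaBandMap m lam F (b, i, s) = bandArrow m lam i (fun t => F (b, i + 1, t)) s := rfl

variable {m lam}

lemma bandArrow_injective (hlam : lam ≠ 0) (i : ZMod n) :
    Function.Injective (bandArrow m lam i) := by
  unfold bandArrow
  split_ifs
  · exact jordan_injective hlam
  · exact Function.injective_id

lemma thetaBandMap_injective (hlam : lam ≠ 0) :
    Function.Injective (thetaBandMap (n := n) m lam) := by
  intro F G h
  funext ⟨b, j, s⟩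
  have hslice : bandArrow m lam (j - 1) (fun t => F (b, j, t))
      = bandArrow m lam (j - 1) (fun t => G (b, j, t)) := by
    funext t
    simpa only [thetaBandMap_apply, sub_add_cancel] using congrFun h (b, j - 1, t)
  exact congrFun (bandArrow_injective hlam _ hslice) s

def etaBandScale (u : Kˣ) (q : Bool × ZMod n × Fin m) : Kˣ :=
  u⁻¹ ^ ((q.2.2 : ℕ) + if q.1 ∧ q.2.1 = 1 then 1 else 0)

def etaBandEquiv (u : Kˣ) : ((Bool × ZMod n × Fin m) → K) ≃ₗ[K] ((Bool × ZMod n × Fin m) → K) :=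
  LinearEquiv.piCongrRight fun q => LinearEquiv.smulOfUnit (etaBandScale u q)

lemma etaBandEquiv_apply (u : Kˣ) (F : (Bool × ZMod n × Fin m) → K) (q : Bool × ZMod n × Fin m) :
    etaBandEquiv u F q = (etaBandScale u q : K) * F q := rfl

lemma etaBandScale_true_mul (u : Kˣ) (i : ZMod n) (s : Fin m) :
    (etaBandScale u (true, i, s) : K) * (if i = 1 then (u : K) else 1)
      = etaBandScale u (false, i, s) := by
  by_cases hi : i = 1 <;> simp [etaBandScale, hi, pow_succ]

lemma etaBandScale_mul_bandArrow (u : Kˣ) (i : ZMod n) (g : Fin m → K) (s : Fin m) :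
    (etaBandScale u (true, i, s) : K) * bandArrow m lam i g s
      = bandArrow m (lam * (u : K)⁻¹) i (fun t => etaBandScale u (false, i + 1, t) * g t) s := by
  by_cases hi : i = 1
  · simpa [bandArrow, hi, etaBandScale] using pow_succ_mul_jordan_apply (u : K)⁻¹ g s
  · simp [bandArrow, hi, etaBandScale]

variable (m lam) [NeZero n] (k : ZMod n)

lemma bandB_ρ_apply (x : Nak n K) (v : (Bool × ZMod n × Fin m) → K) (b : Bool) (i : ZMod n)
    (s : Fin m) :
    (bandB k m lam).ρ x v (b, i, s)
      = if b then x.e (i + 1) * v (b, i, s) + x.a i * v (false, i, s)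
        else x.e i * v (b, i, s) := by
  change Pdiag _ x.e v (b, i, s) + bandD m (Pdiag _ x.a v) (b, i, s) = _
  cases b <;> simp

lemma bandB_ρop_apply (y : (Nak n K)ᵐᵒᵖ) (v : (Bool × ZMod n × Fin m) → K) (b : Bool)
    (i : ZMod n) (s : Fin m) :
    (bandB k m lam).ρop y v (b, i, s)
      = y.unop.e (i - (k - 1)) * v (b, i, s)
        + y.unop.a (i - (k - 1))
          * if b then bandArrow m lam i (fun t => v (false, i + 1, t)) s else 0 := by
  change Pdiag (fun q : Bool × ZMod n × Fin m => q.2.1) (rot (k - 1) y.unop).e v (b, i, s)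
    + Pdiag (fun q : Bool × ZMod n × Fin m => q.2.1) (rot (k - 1) y.unop).a
      (bandDr m lam v) (b, i, s) = _
  cases b
  · simp [rot]
  · by_cases hi : i = 1 <;> simp [rot, bandArrow, hi, jordan_apply]

lemma thetaBandMap_ρ_theta (x : Nak n K) (v : (Bool × ZMod n × Fin m) → K) :
    thetaBandMap m lam ((bandB k m lam).ρ (theta x) v)
      = (bandB (k - 1) m lam).ρ x (thetaBandMap m lam v) := by
  funext ⟨b, i, s⟩
  change bandArrow m lam i (fun t => (bandB k m lam).ρ (theta x) v (b, i + 1, t)) s = _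
  cases b <;> simp [thetaBandMap_apply, bandB_ρ_apply, LinearMap.apply_fun_add,
      LinearMap.apply_fun_mul]

lemma thetaBandMap_ρop (y : (Nak n K)ᵐᵒᵖ) (v : (Bool × ZMod n × Fin m) → K) :
    thetaBandMap m lam ((bandB k m lam).ρop y v)
      = (bandB (k - 1) m lam).ρop y (thetaBandMap m lam v) := by
  funext ⟨b, i, s⟩
  have hcol : i + 1 - (k - 1) = i - (k - 1 - 1) := by ring
  change bandArrow m lam i (fun t => (bandB k m lam).ρop y v (b, i + 1, t)) s = _
  cases b <;> simp [thetaBandMap_apply, bandB_ρop_apply, LinearMap.apply_fun_add,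
      LinearMap.apply_fun_mul, hcol]

variable {m lam}

lemma twistL_theta_bandB_iso (hlam : lam ≠ 0) :
    BiMod.Iso ((bandB k m lam).twistL theta) (bandB (k - 1) m lam) :=
  ⟨LinearEquiv.ofInjectiveEndo _ (thetaBandMap_injective hlam),
    thetaBandMap_ρ_theta m lam k, thetaBandMap_ρop m lam k⟩

lemma etaBandEquiv_ρ_eta (u : Kˣ) (x : Nak n K) (v : (Bool × ZMod n × Fin m) → K) :
    etaBandEquiv u ((bandB k m lam).ρ (eta u x) v)
      = (bandB k m (lam * (u : K)⁻¹)).ρ x (etaBandEquiv u v) := by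
  funext ⟨b, i, s⟩
  change (etaBandScale u (b, i, s) : K) * (bandB k m lam).ρ (eta u x) v (b, i, s) = _
  cases b
  · simp only [bandB_ρ_apply, eta_e, etaBandEquiv_apply, Bool.false_eq_true, ↓reduceIte]
    ring
  · simp only [bandB_ρ_apply, eta_e, eta_a, etaBandEquiv_apply, ↓reduceIte,
      ← etaBandScale_true_mul u i s]
    ring

lemma etaBandEquiv_ρop (u : Kˣ) (y : (Nak n K)ᵐᵒᵖ) (v : (Bool × ZMod n × Fin m) → K) :
    etaBandEquiv u ((bandB k m lam).ρop y v)
      = (bandB k m (lam * (u : K)⁻¹)).ρop y (etaBandEquiv u v) := by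
  funext ⟨b, i, s⟩
  change (etaBandScale u (b, i, s) : K) * (bandB k m lam).ρop y v (b, i, s) = _
  cases b
  · simp only [bandB_ρop_apply, etaBandEquiv_apply, Bool.false_eq_true, ↓reduceIte]
    ring
  · simp only [bandB_ρop_apply, etaBandEquiv_apply, ↓reduceIte,
      ← etaBandScale_mul_bandArrow u i]
    ring

lemma twistL_eta_bandB_iso (u : Kˣ) :
    BiMod.Iso ((bandB k m lam).twistL (eta u)) (bandB k m (lam * (u : K)⁻¹)) :=
  ⟨etaBandEquiv u, etaBandEquiv_ρ_eta k u, etaBandEquiv_ρop k u⟩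

end Band

theorem twistL_band_general
    (n : ℕ) [NeZero n] (K : Type) [Field K]
    (k : ZMod n) (m : ℕ) (lam mu : K) (hlam : lam ≠ 0) (hmu : mu ≠ 0) :
    BiMod.Iso ((bandB k m lam).twistL theta) (bandB (k - 1) m lam) ∧
    BiMod.Iso ((bandB k m lam).twistL (eta (Units.mk0 mu hmu))) (bandB k m (lam * mu⁻¹)) :=
  ⟨twistL_theta_bandB_iso k hlam, twistL_eta_bandB_iso k (Units.mk0 mu hmu)⟩

/-- **Lemma 2.3**. Twisting the left action of a band bimodule:
`^θB(k,m,λ) ≅ B(k−1,m,λ)` and `^{η_μ}B(k,m,λ) ≅ B(k,m,λμ⁻¹)`. -/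
theorem twistL_band
    (n : ℕ) [NeZero n] (K : Type) [Field K] [IsAlgClosed K] [CharZero K]
    (k : ZMod n) (m : ℕ) (hm : 0 < m) (lam mu : K) (hlam : lam ≠ 0) (hmu : mu ≠ 0) :
    BiMod.Iso ((bandB k m lam).twistL theta) (bandB (k - 1) m lam) ∧
    BiMod.Iso ((bandB k m lam).twistL (eta (Units.mk0 mu hmu))) (bandB k m (lam * mu⁻¹)) :=
  twistL_band_general n K k m lam mu hlam hmu

end NakayamaCells
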